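/- Quasi-periodicity of the explicit kernel ϑ in the integration variables: for every 1 ≤ μ ≤ m and all admissible arguments, ϑ_ε(x₁, …, x_μ q⁻⁴, …, x_m | ζ₁, …, ζ_N) = (∏_{j=1}^{N} (−x_μ q⁻¹/z_j)) · ϑ_ε(x₁, …, x_m | ζ₁, …, ζ_N), where z_j = ζ_j². -/

import Mathlib

noncomputable section

open scoped BigOperators

/-- The infinite q-Pochhammer symbol `(a; p)_∞ = ∏_{k ≥ 0} (1 - a pᵏ)`. -/
def qPoch (a p : ℂ) : ℂ := ∏' k : ℕ, (1 - a * p ^ k)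

/-- The double infinite q-Pochhammer symbol `(a; p, p)_∞ = ∏_{k,l ≥ 0} (1 - a p^{k+l})`. -/
def qPoch2 (a p : ℂ) : ℂ := ∏' kl : ℕ × ℕ, (1 - a * p ^ (kl.1 + kl.2))

/-- `θ(z|p) = (z;p)_∞ (p/z;p)_∞`. -/
def theta (z p : ℂ) : ℂ := qPoch z p * qPoch (p / z) p

/-- `t(ζ) = ζ⁻¹ θ(qζ²|q⁴)/θ(qζ⁻²|q⁴)`. -/
def tfun (q ζ : ℂ) : ℂ := ζ⁻¹ * theta (q * ζ ^ 2) (q ^ 4) / theta (q * (ζ ^ 2)⁻¹) (q ^ 4)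

/-- `b(ζ) = (1-ζ²)q/(1-ζ²q²)`. -/
def Rb (q ζ : ℂ) : ℂ := (1 - ζ ^ 2) * q / (1 - ζ ^ 2 * q ^ 2)

/-- `c(ζ) = (1-q²)ζ/(1-ζ²q²)`. -/
def Rc (q ζ : ℂ) : ℂ := (1 - q ^ 2) * ζ / (1 - ζ ^ 2 * q ^ 2)

/-- The six-vertex R-matrix; the index `0 : Fin 2` encodes `+` and `1 : Fin 2` encodes `−`.
Rows are the upper (outgoing) indices, columns the lower (incoming) indices. -/
def Rmat (q ζ : ℂ) : Matrix (Fin 2 × Fin 2) (Fin 2 × Fin 2) ℂ :=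
  Matrix.of fun e f =>
    if e.1 = e.2 then (if f = e then 1 else 0)
    else if f = e then Rb q ζ
    else if f = (e.2, e.1) then Rc q ζ
    else 0

/-- The transposition `P(x⊗y) = y⊗x` on `V ⊗ V`. -/
def Pmat : Matrix (Fin 2 × Fin 2) (Fin 2 × Fin 2) ℂ :=
  Matrix.of fun e f => if f = (e.2, e.1) then 1 else 0

/-- The scalar factor `S₀(ζ)` with `z = ζ²`. -/
def S0 (q ζ : ℂ) : ℂ :=
  ζ * qPoch (ζ ^ 2)⁻¹ (q ^ 4) * qPoch (ζ ^ 2 * q ^ 2) (q ^ 4) /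
    (qPoch (ζ ^ 2) (q ^ 4) * qPoch ((ζ ^ 2)⁻¹ * q ^ 2) (q ^ 4))

/-- The scattering matrix `S(ζ) = S₀(ζ) R(ζ)`. -/
def Smat (q ζ : ℂ) : Matrix (Fin 2 × Fin 2) (Fin 2 × Fin 2) ℂ := S0 q ζ • Rmat q ζ

/-- Admissibility of the argument of the S-matrix: all denominators occurring in
`S(ζ)` are nonzero. -/
def Sdef (q ζ : ℂ) : Prop :=
  ζ ≠ 0 ∧ 1 - ζ ^ 2 * q ^ 2 ≠ 0 ∧ qPoch (ζ ^ 2) (q ^ 4) ≠ 0 ∧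
    qPoch ((ζ ^ 2)⁻¹ * q ^ 2) (q ^ 4) ≠ 0

/-- Kronecker (tensor) product of two operators on `V`. -/
def kron (A B : Matrix (Fin 2) (Fin 2) ℂ) : Matrix (Fin 2 × Fin 2) (Fin 2 × Fin 2) ℂ :=
  Matrix.of fun e f => A e.1 f.1 * B e.2 f.2

/-- `D = diag(δ, δ⁻¹)`. -/
def Dmat (δ : ℂ) : Matrix (Fin 2) (Fin 2) ℂ :=
  Matrix.of fun i j => if i = j then (if i = 0 then δ else δ⁻¹) else 0

/-- `D̄ = diag(δ, −δ⁻¹)`. -/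
def Dbar (δ : ℂ) : Matrix (Fin 2) (Fin 2) ℂ :=
  Matrix.of fun i j => if i = j then (if i = 0 then δ else -δ⁻¹) else 0

/-- The operator on `V^{⊗N}` acting as `M` on the `(j,k)`-th tensor factors and as the
identity elsewhere.  A vector of `V^{⊗N}` is encoded by its coordinates
`(Fin N → Fin 2) → ℂ` in the basis `v_{ε₁} ⊗ ⋯ ⊗ v_{ε_N}`. -/
def embed2 {N : ℕ} (M : Matrix (Fin 2 × Fin 2) (Fin 2 × Fin 2) ℂ) (j k : Fin N) :
    Matrix (Fin N → Fin 2) (Fin N → Fin 2) ℂ :=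
  Matrix.of fun a b =>
    M (a j, a k) (b j, b k) *
      ∏ i : Fin N, (if i = j ∨ i = k then 1 else if a i = b i then 1 else 0)

/-- The operator on `V^{⊗N}` acting as `M` on the `j`-th tensor factor. -/
def embed1 {N : ℕ} (M : Matrix (Fin 2) (Fin 2) ℂ) (j : Fin N) :
    Matrix (Fin N → Fin 2) (Fin N → Fin 2) ℂ :=
  Matrix.of fun a b =>
    M (a j) (b j) * ∏ i : Fin N, (if i = j then 1 else if a i = b i then 1 else 0)

/-- Number of `−` signs (i.e. of indices equal to `1`) in a basis configuration. -/
def countMinus {N : ℕ} (a : Fin N → Fin 2) : ℕ :=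
  (Finset.univ.filter fun i => a i = 1).card

/-- Membership in the weight subspace `V^{(n l)} ⊆ V^{⊗N}` (with `l = N - n`):
the coordinates vanish off configurations with exactly `n` minus signs. -/
def inVnl {N : ℕ} (n : ℕ) (v : (Fin N → Fin 2) → ℂ) : Prop :=
  ∀ a, countMinus a ≠ n → v a = 0

/-- The vector `w ⊗ u_σ ∈ V^{⊗N}`, where `w ∈ V^{⊗(N-2)}` occupies the slots `0,…,N-3`
and `u_σ = v₋⊗v₊ + σ v₊⊗v₋` occupies the slots `N-2, N-1`. -/
def tensU {N : ℕ} (hN : 2 ≤ N) (σ : ℂ) (w : (Fin (N - 2) → Fin 2) → ℂ) :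
    (Fin N → Fin 2) → ℂ :=
  fun a =>
    w (fun i => a ⟨i.1, by have := i.isLt; omega⟩) *
      (if a ⟨N - 2, by omega⟩ = 1 ∧ a ⟨N - 1, by omega⟩ = 0 then 1
       else if a ⟨N - 2, by omega⟩ = 0 ∧ a ⟨N - 1, by omega⟩ = 1 then σ else 0)

/-- `P₁₂ P₂₃ ⋯ P_{N−1,N}` on `V^{⊗N}` (1-based labels; 0-based sites `0,…,N-1`). -/
def Pchain (N : ℕ) : Matrix (Fin N → Fin 2) (Fin N → Fin 2) ℂ :=
  (List.ofFn fun t : Fin (N - 1) =>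
    embed2 Pmat ⟨t.1, by have := t.isLt; omega⟩ ⟨t.1 + 1, by have := t.isLt; omega⟩).prod

/-- `S_{1,…,N−2|N−1}(ζ₁,…,ζ_{N−2}|w) = S_{1,N−1}(ζ₁/w) ⋯ S_{N−2,N−1}(ζ_{N−2}/w)`
(1-based labels; the `j`-th spectral parameter `ζ_j` is `ζ (j-1)`). -/
def SchainUp (q : ℂ) (N : ℕ) (ζ : ℕ → ℂ) (w : ℂ) :
    Matrix (Fin N → Fin 2) (Fin N → Fin 2) ℂ :=
  (List.ofFn fun t : Fin (N - 2) =>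
    embed2 (Smat q (ζ t.1 / w)) ⟨t.1, by have := t.isLt; omega⟩
      ⟨N - 2, by have := t.isLt; omega⟩).prod

/-- `S_{N−1|1,…,N−2}(w|ζ₁,…,ζ_{N−2}) = S_{N−1,N−2}(w/ζ_{N−2}) ⋯ S_{N−1,1}(w/ζ₁)`. -/
def SchainDown (q : ℂ) (N : ℕ) (ζ : ℕ → ℂ) (w : ℂ) :
    Matrix (Fin N → Fin 2) (Fin N → Fin 2) ℂ :=
  (List.ofFn fun t : Fin (N - 2) =>
    embed2 (Smat q (w / ζ (N - 3 - t.1))) ⟨N - 2, by have := t.isLt; omega⟩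
      ⟨N - 3 - t.1, by have := t.isLt; omega⟩).prod

/-- `R_{N−1|1,…,N−2}(w|ζ₁,…,ζ_{N−2}) = R_{N−1,N−2}(w/ζ_{N−2}) ⋯ R_{N−1,1}(w/ζ₁)`. -/
def RchainDown (q : ℂ) (N : ℕ) (ζ : ℕ → ℂ) (w : ℂ) :
    Matrix (Fin N → Fin 2) (Fin N → Fin 2) ℂ :=
  (List.ofFn fun t : Fin (N - 2) =>
    embed2 (Rmat q (w / ζ (N - 3 - t.1))) ⟨N - 2, by have := t.isLt; omega⟩
      ⟨N - 3 - t.1, by have := t.isLt; omega⟩).prod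

/-- `R_{1,…,M−1|M}(ζ₁,…,ζ_{M−1}|w) = R_{1,M}(ζ₁/w) ⋯ R_{M−1,M}(ζ_{M−1}/w)` on `V^{⊗M}`. -/
def RchainUp (q : ℂ) (M : ℕ) (ζ : ℕ → ℂ) (w : ℂ) :
    Matrix (Fin M → Fin 2) (Fin M → Fin 2) ℂ :=
  (List.ofFn fun t : Fin (M - 1) =>
    embed2 (Rmat q (ζ t.1 / w)) ⟨t.1, by have := t.isLt; omega⟩
      ⟨M - 1, by have := t.isLt; omega⟩).prod

/-- The action of `Δ^{(M-1)}(f₀)` on the tensor product of evaluation representations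
with parameters `ζ 0, …, ζ (M-1)`:
`π(f₀) = Σ_j 1^{⊗j} ⊗ π_{ζ_j}(f₀) ⊗ π(t₀⁻¹) ⊗ ⋯ ⊗ π(t₀⁻¹)`, where
`π_ζ(f₀)v₊ = 0`, `π_ζ(f₀)v₋ = ζ⁻¹v₊`, `π_ζ(t₀⁻¹)v₊ = q v₊`, `π_ζ(t₀⁻¹)v₋ = q⁻¹ v₋`. -/
def f0op (q : ℂ) (M : ℕ) (ζ : ℕ → ℂ) : Matrix (Fin M → Fin 2) (Fin M → Fin 2) ℂ :=
  ∑ j : Fin M, Matrix.of fun a b =>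
    (if a j = 0 ∧ b j = 1 then (ζ j.1)⁻¹ else 0) *
      ∏ i : Fin M,
        (if i < j then (if a i = b i then 1 else 0)
         else if j < i then (if a i = b i then (if b i = 0 then q else q⁻¹) else 0)
         else 1)

/-- `M = tr_{N−1}( D̄_{N−1} R_{1,…,N−2|N−1}(ζ₁,…,ζ_{N−2}|ζ_{N−1}) ) ∈ End(V^{⊗(N−2)})`:
partial trace over the last factor of `V^{⊗(N-1)}`. -/
def Mop (q δ : ℂ) (N : ℕ) (hN : 3 ≤ N) (ζ : ℕ → ℂ) :
    Matrix (Fin (N - 2) → Fin 2) (Fin (N - 2) → Fin 2) ℂ :=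
  Matrix.of fun a b => ∑ e : Fin 2,
    (embed1 (N := N - 1) (Dbar δ) ⟨N - 2, by omega⟩ * RchainUp q (N - 1) ζ (ζ (N - 2)))
      (fun i => if h : i.1 < N - 2 then a ⟨i.1, h⟩ else e)
      (fun i => if h : i.1 < N - 2 then b ⟨i.1, h⟩ else e)

/-- `f(z) = (q⁵z;q⁴,q⁴)_∞ (q⁵/z;q⁴,q⁴)_∞ / ((q³z;q⁴,q⁴)_∞ (q³/z;q⁴,q⁴)_∞)`. -/
def ffun (q z : ℂ) : ℂ :=
  qPoch2 (q ^ 5 * z) (q ^ 4) * qPoch2 (q ^ 5 / z) (q ^ 4) /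
    (qPoch2 (q ^ 3 * z) (q ^ 4) * qPoch2 (q ^ 3 / z) (q ^ 4))

/-- `u = (−1)^{N−m} s^{N−6m} (∏_μ x_μ)(∏_k ξ_k) / (∏_j ζ_j)`, where `s² = q⁻¹`
(so that `s^{N-6m}` realizes `τ^{N/2-3m}` with `τ = q⁻¹`). -/
def uu (s : ℂ) (N m : ℕ) (ξ x ζ : ℕ → ℂ) : ℂ :=
  (-1) ^ (N - m) * s ^ ((N : ℤ) - 6 * (m : ℤ)) *
    (∏ μ ∈ Finset.range m, x μ) * (∏ k ∈ Finset.range (N - 2 * m), ξ k) /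
    (∏ j ∈ Finset.range N, ζ j)

/-- The explicit kernel
`ϑ_ε(x₁,…,x_m|ζ₁,…,ζ_N) = (∏_j ζ_j^{N−2m}) (∏_{μ<ν} x_μ θ(x_ν/x_μ|q²))
  ε^N θ(−εu|q²) (∏_{k,μ} θ(ξ_k²/x_μ|q⁴)) (∏_{j,k} f(z_j/ξ_k²))`, `z_j = ζ_j²`. -/
def vth (q s : ℂ) (N m : ℕ) (ξ : ℕ → ℂ) (ε : ℂ) (x ζ : ℕ → ℂ) : ℂ :=
  (∏ j ∈ Finset.range N, ζ j ^ (N - 2 * m)) *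
    (∏ μ ∈ Finset.range m, ∏ ν ∈ Finset.Ioo μ m, x μ * theta (x ν / x μ) (q ^ 2)) *
    (ε ^ N * theta (-ε * uu s N m ξ x ζ) (q ^ 2)) *
    (∏ k ∈ Finset.range (N - 2 * m), ∏ μ ∈ Finset.range m, theta (ξ k ^ 2 / x μ) (q ^ 4)) *
    (∏ j ∈ Finset.range N, ∏ k ∈ Finset.range (N - 2 * m), ffun q (ζ j ^ 2 / ξ k ^ 2))

/-! Everything rests on the quasi-periodicity `θ(pz|p) = -z⁻¹ θ(z|p)`, which follows from
`(a;p)_∞ = (1 - a)(ap;p)_∞`. Replacing `x_μ` by `x_μ q⁻⁴` moves the arguments of the theta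
functions containing `x_μ` by powers of their bases: the pair factor with `ν ≠ μ` picks up
`x_μ²/(q⁶x_ν²)`, `θ(-εu|q²)` picks up `u²/q⁶`, and `θ(ξ_k²/x_μ|q⁴)` picks up `-x_μ/ξ_k²`.
Since `u² = q^{6m-N} (∏x)² (∏ξ)² / (∏ζ)²`, these multipliers collapse to `∏_j (-x_μ q⁻¹/z_j)`. -/

open Finset Function

lemma multipliable_one_sub_mul_pow (a : ℂ) {p : ℂ} (hp : ‖p‖ < 1) :
    Multipliable fun k : ℕ => 1 - a * p ^ k := by
  simpa [sub_eq_add_neg] using multipliable_one_add_of_summable (f := fun k : ℕ => -(a * p ^ k))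
    (by simpa using (summable_geometric_of_lt_one (norm_nonneg p) hp).mul_left ‖a‖)

lemma qPoch_eq_one_sub_mul (a : ℂ) {p : ℂ} (hp : ‖p‖ < 1) :
    qPoch a p = (1 - a) * qPoch (a * p) p := by
  have hshift : ∀ k : ℕ, 1 - a * p ^ (k + 1) = 1 - a * p * p ^ k := fun k => by ring
  have hmul : Multipliable fun k : ℕ => 1 - a * p ^ (k + 1) := by
    simpa only [hshift] using multipliable_one_sub_mul_pow (a * p) hp
  unfold qPoch
  rw [tprod_eq_zero_mul' (f := fun k : ℕ => 1 - a * p ^ k) hmul, pow_zero, mul_one]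
  simp only [hshift]

lemma theta_mul_base {p : ℂ} (hp : ‖p‖ < 1) (hp0 : p ≠ 0) {z : ℂ} (hz : z ≠ 0) :
    theta (p * z) p = -z⁻¹ * theta z p := by
  unfold theta
  rw [show p / (p * z) = z⁻¹ by field_simp, show p / z = z⁻¹ * p by ring,
    qPoch_eq_one_sub_mul z⁻¹ hp, qPoch_eq_one_sub_mul z hp, mul_comm z p]
  field_simp
  ring

lemma theta_div_base {p : ℂ} (hp : ‖p‖ < 1) (hp0 : p ≠ 0) {z : ℂ} (hz : z ≠ 0) :
    theta (z / p) p = -(z / p) * theta z p := by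
  have h := theta_mul_base hp hp0 (div_ne_zero hz hp0)
  rw [mul_div_cancel₀ _ hp0] at h
  rw [h]
  field_simp

lemma theta_mul_base_sq {p : ℂ} (hp : ‖p‖ < 1) (hp0 : p ≠ 0) {z : ℂ} (hz : z ≠ 0) :
    theta (p ^ 2 * z) p = theta z p / (p * z ^ 2) := by
  rw [sq, mul_assoc, theta_mul_base hp hp0 (mul_ne_zero hp0 hz), theta_mul_base hp hp0 hz]
  field_simp

lemma theta_div_base_sq {p : ℂ} (hp : ‖p‖ < 1) (hp0 : p ≠ 0) {z : ℂ} (hz : z ≠ 0) :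
    theta (z / p ^ 2) p = z ^ 2 / p ^ 3 * theta z p := by
  rw [sq, ← div_div, theta_div_base hp hp0 (div_ne_zero hz hp0), theta_div_base hp hp0 hz]
  field_simp

lemma Finset.prod_apply_update_of_mem {ι α M : Type*} [DecidableEq ι] [CommMonoid M]
    {s : Finset ι} {i : ι} (hi : i ∈ s) (g : ι → α) (f : α → M) {b : α} {c : M}
    (h : f b = c * f (g i)) :
    ∏ k ∈ s, f (update g i b k) = c * ∏ k ∈ s, f (g k) := by
  rw [← mul_prod_erase s _ hi, ← mul_prod_erase s _ hi, update_self, h, mul_assoc,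
    prod_congr rfl fun k hk => by rw [update_of_ne (ne_of_mem_erase hk)]]

lemma prod_pairs_eq_prod_erase_mul {M : Type*} [CommMonoid M] {m μ : ℕ} (hμ : μ < m)
    {f g : ℕ → ℕ → M} (c : ℕ → M)
    (hleft : ∀ b, μ < b → b < m → f μ b = c b * g μ b)
    (hright : ∀ a < μ, f a μ = c a * g a μ)
    (hother : ∀ a b, a < b → b < m → a ≠ μ → b ≠ μ → f a b = g a b) :
    ∏ a ∈ range m, ∏ b ∈ Ioo a m, f a b
      = (∏ ν ∈ (range m).erase μ, c ν) * ∏ a ∈ range m, ∏ b ∈ Ioo a m, g a b := by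
  have hfactor : ∀ a ∈ range m, ∀ b ∈ Ioo a m,
      f a b = ((if a = μ then c b else 1) * (if b = μ then c a else 1)) * g a b := by
    intro a _ b hb
    obtain ⟨hab, hbm⟩ := mem_Ioo.mp hb
    by_cases haμ : a = μ
    · subst haμ
      simp [hab.ne', hleft b hab hbm]
    · by_cases hbμ : b = μ
      · subst hbμ
        simp [haμ, hright a hab]
      · simp [haμ, hbμ, hother a b hab hbm haμ hbμ]
  have hsplit : (range m).erase μ = range μ ∪ Ioo μ m := by
    ext ν
    simp only [mem_erase, mem_range, mem_union, mem_Ioo]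
    omega
  have hdisj : Disjoint (range μ) (Ioo μ m) :=
    disjoint_left.mpr fun ν h1 h2 => by simp only [mem_range, mem_Ioo] at h1 h2; omega
  have hleft_prod : ∏ a ∈ range m, ∏ b ∈ Ioo a m, (if a = μ then c b else 1)
      = ∏ b ∈ Ioo μ m, c b := by
    rw [prod_eq_single_of_mem μ (mem_range.mpr hμ)
      fun a _ ha => prod_eq_one fun b _ => if_neg ha]
    exact prod_congr rfl fun b _ => if_pos rfl
  have hright_prod : ∏ a ∈ range m, ∏ b ∈ Ioo a m, (if b = μ then c a else 1)
      = ∏ a ∈ range μ, c a := by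
    rw [prod_congr rfl fun a _ => prod_ite_eq' (Ioo a m) μ fun _ => c a, ← prod_filter]
    congr 1
    ext a
    simp only [mem_filter, mem_range, mem_Ioo]
    omega
  rw [prod_congr rfl fun a ha => prod_congr rfl (hfactor a ha)]
  simp only [prod_mul_distrib]
  rw [hleft_prod, hright_prod, hsplit, prod_union hdisj, mul_comm (∏ ν ∈ range μ, c ν)]

section Kernel

variable {p : ℂ} (hp : ‖p‖ < 1) (hp0 : p ≠ 0) {m μ : ℕ} (hμ : μ < m) {x : ℕ → ℂ}
include hp hp0 hμ

lemma prod_pairs_theta_update (hx : ∀ ν < m, x ν ≠ 0) :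
    ∏ a ∈ range m, ∏ b ∈ Ioo a m,
        update x μ (x μ / p ^ 2) a *
          theta (update x μ (x μ / p ^ 2) b / update x μ (x μ / p ^ 2) a) p
      = (∏ ν ∈ (range m).erase μ, x μ ^ 2 / (p ^ 3 * x ν ^ 2)) *
          ∏ a ∈ range m, ∏ b ∈ Ioo a m, x a * theta (x b / x a) p := by
  refine prod_pairs_eq_prod_erase_mul hμ _ (fun b hμb hbm => ?_) (fun a haμ => ?_)
    (fun a b _ _ haμ hbμ => by rw [update_of_ne haμ, update_of_ne hbμ])
  · have hxb := hx b hbm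
    have hxμ := hx μ hμ
    rw [update_self, update_of_ne hμb.ne', show x b / (x μ / p ^ 2) = p ^ 2 * (x b / x μ) by
      field_simp, theta_mul_base_sq hp hp0 (div_ne_zero hxb hxμ)]
    field_simp
  · have hxa := hx a (haμ.trans hμ)
    have hxμ := hx μ hμ
    rw [update_self, update_of_ne haμ.ne, div_right_comm,
      theta_div_base_sq hp hp0 (div_ne_zero hxμ hxa)]
    field_simp

lemma prod_theta_div_update (hxμ : x μ ≠ 0) {y : ℂ} (hy : y ≠ 0) :
    ∏ ν ∈ range m, theta (y / update x μ (x μ / p) ν) p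
      = -x μ / y * ∏ ν ∈ range m, theta (y / x ν) p := by
  refine prod_apply_update_of_mem (mem_range.mpr hμ) x (fun t => theta (y / t) p) ?_
  rw [show y / (x μ / p) = p * (y / x μ) by field_simp,
    theta_mul_base hp hp0 (div_ne_zero hy hxμ), inv_div, neg_div]

end Kernel

lemma uu_update (s : ℂ) (N : ℕ) {m μ : ℕ} (hμ : μ < m) (ξ x ζ : ℕ → ℂ) (c : ℂ) :
    uu s N m ξ (update x μ (x μ / c)) ζ = uu s N m ξ x ζ / c := by
  unfold uu
  rw [prod_update_of_mem (mem_range.mpr hμ),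
    prod_eq_mul_prod_sdiff_singleton_of_mem (mem_range.mpr hμ) x]
  ring

lemma uu_ne_zero {s : ℂ} (hs : s ≠ 0) {N m : ℕ} {ξ x ζ : ℕ → ℂ} (hξ : ∀ k < N - 2 * m, ξ k ≠ 0)
    (hx : ∀ ν < m, x ν ≠ 0) (hζ : ∀ j < N, ζ j ≠ 0) :
    uu s N m ξ x ζ ≠ 0 := by
  simp only [uu, ne_eq, div_eq_zero_iff, mul_eq_zero, prod_eq_zero_iff, mem_range, not_or,
    not_exists, not_and]
  exact ⟨⟨⟨⟨by simp, zpow_ne_zero _ hs⟩, hx⟩, hξ⟩, hζ⟩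

lemma uu_sq {q s : ℂ} (hq : q ≠ 0) (hs : s ^ 2 = q⁻¹) (N m : ℕ) (ξ x ζ : ℕ → ℂ) :
    uu s N m ξ x ζ ^ 2 = q ^ (6 * m) / q ^ N * (∏ ν ∈ range m, x ν) ^ 2 *
      (∏ k ∈ range (N - 2 * m), ξ k) ^ 2 / (∏ j ∈ range N, ζ j) ^ 2 := by
  have hs_pow : (s ^ ((N : ℤ) - 6 * m)) ^ 2 = q ^ (6 * m) / q ^ N := by
    rw [← zpow_natCast, ← zpow_mul, mul_comm, zpow_mul, zpow_natCast, hs, inv_zpow',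
      neg_sub, zpow_sub₀ hq]
    norm_cast
  unfold uu
  rw [div_pow, mul_pow, mul_pow, mul_pow, hs_pow, ← pow_mul, mul_comm (N - m), pow_mul]
  norm_num

lemma quasi_periodicity_factor {q s : ℂ} (hq : q ≠ 0) (hs : s ^ 2 = q⁻¹) {N m μ : ℕ}
    (hm : 2 * m ≤ N) (hμ : μ < m) {ξ x ζ : ℕ → ℂ} (hξ : ∀ k < N - 2 * m, ξ k ≠ 0)
    (hx : ∀ ν < m, x ν ≠ 0) (hζ : ∀ j < N, ζ j ≠ 0) :
    (∏ ν ∈ (range m).erase μ, x μ ^ 2 / ((q ^ 2) ^ 3 * x ν ^ 2)) *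
        (uu s N m ξ x ζ ^ 2 / (q ^ 2) ^ 3) * ∏ k ∈ range (N - 2 * m), -x μ / ξ k ^ 2
      = ∏ j ∈ range N, -x μ / q / ζ j ^ 2 := by
  have hP : ∏ ν ∈ (range m).erase μ, x ν ≠ 0 :=
    prod_ne_zero_iff.mpr fun ν hν => hx ν (mem_range.mp (mem_of_mem_erase hν))
  have hΞ : ∏ k ∈ range (N - 2 * m), ξ k ≠ 0 :=
    prod_ne_zero_iff.mpr fun k hk => hξ k (mem_range.mp hk)
  have hZ : ∏ j ∈ range N, ζ j ≠ 0 :=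
    prod_ne_zero_iff.mpr fun j hj => hζ j (mem_range.mp hj)
  rw [uu_sq hq hs, ← mul_prod_erase (range m) x (mem_range.mpr hμ)]
  simp only [prod_div_distrib, prod_mul_distrib, prod_const, prod_pow, card_erase_of_mem
    (mem_range.mpr hμ), card_range]
  field_simp
  obtain ⟨k, rfl⟩ : ∃ k, N = 2 * m + k := ⟨N - 2 * m, by omega⟩
  obtain ⟨n, rfl⟩ : ∃ n, m = n + 1 := ⟨m - 1, by omega⟩
  simp only [Nat.add_sub_cancel_left, Nat.add_sub_cancel, pow_add, pow_mul]
  ring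

theorem vth_x_quasi_periodicity_general (q : ℂ) (hq0 : 0 < ‖q‖) (hq1 : ‖q‖ < 1)
    (N m : ℕ) (hm : 2 * m ≤ N)
    (ξ : ℕ → ℂ) (hξ : ∀ k < N - 2 * m, ξ k ≠ 0)
    (s : ℂ) (hs : s ^ 2 = q⁻¹) (ε : ℂ) (hε : ε = 1 ∨ ε = -1)
    (x ζ : ℕ → ℂ) (hx : ∀ ν < m, x ν ≠ 0) (hζ : ∀ j < N, ζ j ≠ 0)
    (μ : ℕ) (hμ : μ < m) :
    vth q s N m ξ ε (fun ν => if ν = μ then x μ / q ^ 4 else x ν) ζ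
      = (∏ j ∈ Finset.range N, (-(x μ) / q / ζ j ^ 2)) * vth q s N m ξ ε x ζ := by
  have hq : q ≠ 0 := norm_pos_iff.mp hq0
  have hs0 : s ≠ 0 := by rintro rfl; exact hq (by simpa using hs.symm)
  have hq2 : ‖q ^ 2‖ < 1 := by simpa using pow_lt_one₀ (norm_nonneg q) hq1 two_ne_zero
  have hq4 : ‖(q ^ 2) ^ 2‖ < 1 := by simpa using pow_lt_one₀ (norm_nonneg _) hq2 two_ne_zero
  have hu : -ε * uu s N m ξ x ζ ≠ 0 :=
    mul_ne_zero (by rcases hε with rfl | rfl <;> norm_num) (uu_ne_zero hs0 hξ hx hζ)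
  have hupdate : (fun ν => if ν = μ then x μ / (q ^ 2) ^ 2 else x ν)
      = update x μ (x μ / (q ^ 2) ^ 2) := funext fun ν => (update_apply ..).symm
  have htheta_u : theta (-ε * uu s N m ξ (update x μ (x μ / (q ^ 2) ^ 2)) ζ) (q ^ 2)
      = (-ε * uu s N m ξ x ζ) ^ 2 / (q ^ 2) ^ 3 * theta (-ε * uu s N m ξ x ζ) (q ^ 2) := by
    rw [uu_update s N hμ, ← mul_div_assoc, theta_div_base_sq hq2 (pow_ne_zero 2 hq) hu]
  have htheta_ξ : ∏ k ∈ range (N - 2 * m), ∏ ν ∈ range m,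
        theta (ξ k ^ 2 / update x μ (x μ / (q ^ 2) ^ 2) ν) ((q ^ 2) ^ 2)
      = (∏ k ∈ range (N - 2 * m), -x μ / ξ k ^ 2) *
          ∏ k ∈ range (N - 2 * m), ∏ ν ∈ range m, theta (ξ k ^ 2 / x ν) ((q ^ 2) ^ 2) := by
    rw [← prod_mul_distrib]
    exact prod_congr rfl fun k hk => prod_theta_div_update hq4 (by positivity) hμ (hx μ hμ)
      (pow_ne_zero 2 (hξ k (mem_range.mp hk)))
  have hε_sq : (-ε * uu s N m ξ x ζ) ^ 2 = uu s N m ξ x ζ ^ 2 := by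
    rcases hε with rfl | rfl <;> ring
  unfold vth
  rw [show q ^ 4 = (q ^ 2) ^ 2 by ring, hupdate,
    prod_pairs_theta_update hq2 (pow_ne_zero 2 hq) hμ hx, htheta_u, htheta_ξ,
    ← quasi_periodicity_factor hq hs hm hμ hξ hx hζ, ← hε_sq]
  ring

/-- Quasi-periodicity of the kernel `ϑ` in the integration variables:
`ϑ_ε(x₁,…,x_μ q⁻⁴,…,x_m|ζ) = (∏_j (−x_μ q⁻¹/z_j)) ϑ_ε(x|ζ)` with `z_j = ζ_j²`. -/
theorem vth_x_quasi_periodicity (q : ℂ) (hq0 : 0 < ‖q‖) (hq1 : ‖q‖ < 1)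
    (N m : ℕ) (hN : 1 ≤ N) (hm : 2 * m ≤ N)
    (ξ : ℕ → ℂ) (hξ : ∀ k < N - 2 * m, ξ k ≠ 0)
    (s : ℂ) (hs : s ^ 2 = q⁻¹) (ε : ℂ) (hε : ε = 1 ∨ ε = -1)
    (x ζ : ℕ → ℂ) (hx : ∀ ν < m, x ν ≠ 0) (hζ : ∀ j < N, ζ j ≠ 0)
    (hden : ∀ j < N, ∀ k < N - 2 * m,
      qPoch2 (q ^ 3 * (ζ j ^ 2 / ξ k ^ 2)) (q ^ 4) ≠ 0 ∧
      qPoch2 (q ^ 3 / (ζ j ^ 2 / ξ k ^ 2)) (q ^ 4) ≠ 0)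
    (μ : ℕ) (hμ : μ < m) :
    vth q s N m ξ ε (fun ν => if ν = μ then x μ / q ^ 4 else x ν) ζ
      = (∏ j ∈ Finset.range N, (-(x μ) / q / ζ j ^ 2)) * vth q s N m ξ ε x ζ :=
  vth_x_quasi_periodicity_general q hq0 hq1 N m hm ξ hξ s hs ε hε x ζ hx hζ μ hμ
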